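/- For any complex sequence x in the domain D (i.e. ∑_{k≥1}|x_k x_{k+1}| < ∞), the function 𝔉 satisfies the recurrence 𝔉({x_k}_{k=1}^{∞}) = 𝔉({x_k}_{k=2}^{∞}) − x_1 x_2 · 𝔉({x_k}_{k=3}^{∞}). -/

import Mathlib

open Classical

noncomputable def Fterm (x : ℕ → ℂ) (m : ℕ) (k : Fin m → ℕ) : ℂ :=
  if ∀ i : Fin m, ∀ h : (i : ℕ) + 1 < m, k i + 2 ≤ k ⟨(i : ℕ) + 1, h⟩ then
    ∏ i : Fin m, x (k i) * x (k i + 1)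
  else 0

/-- The function 𝔉 applied to the sequence (x 0, x 1, x 2, …), i.e. x is 0-based:
`x k` represents `x_{k+1}` of the paper. -/
noncomputable def FF (x : ℕ → ℂ) : ℂ :=
  1 + ∑' m : ℕ, (-1 : ℂ) ^ (m + 1) * (∑' k : Fin (m + 1) → ℕ, Fterm x (m + 1) k)

/-- 𝔉 of the finite tuple (x 0, …, x (n-1)), by extending with zeros. -/
noncomputable def FFfin (n : ℕ) (x : ℕ → ℂ) : ℂ :=
  FF fun k => if k < n then x k else 0

/-!
Split the admissible index tuples of length `m + 1` by their first index: a tuple starting at `0`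
is `(0, s + 2)` and contributes `x₀ x₁` times the term of `s` for the sequence shifted by two,
while every other admissible tuple is `c + 1` and contributes the term of `c` for the sequence
shifted by one. Absolute convergence justifies the rearrangements: admissible tuples are strictly
increasing, so composing them with the `m!` permutations of `Fin m` embeds `m!` disjoint copies of
them into all `m`-tuples, which bounds the degree-`m` part by `(∑ₙ |xₙ xₙ₊₁|)^m / m!`.
-/

open Function ENNReal
open scoped Nat Relator

def Admissible (m : ℕ) (k : Fin m → ℕ) : Prop :=
  ((· < ·) ⇒ fun a b : ℕ => a + 2 ≤ b) k k

instance : IsTrans ℕ fun a b : ℕ => a + 2 ≤ b := ⟨fun _ _ _ hab hbc => by omega⟩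

theorem admissible_iff_forall_lt {m : ℕ} {k : Fin m → ℕ} :
    Admissible m k ↔ ∀ ⦃i j : Fin m⦄, i < j → k i + 2 ≤ k j := Iff.rfl

theorem Admissible.strictMono {m : ℕ} {k : Fin m → ℕ} (hk : Admissible m k) : StrictMono k :=
  fun _ _ hij => by have := hk hij; omega

theorem Fterm_eq_ite (x : ℕ → ℂ) (m : ℕ) (k : Fin m → ℕ) :
    Fterm x m k = if Admissible m k then ∏ i, x (k i) * x (k i + 1) else 0 := by
  refine if_congr ?_ rfl rfl
  cases m with
  | zero => exact ⟨fun _ i => i.elim0, fun _ i => i.elim0⟩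
  | succ n =>
    rw [Admissible, Fin.liftFun_iff_succ]
    exact ⟨fun h i => h i.castSucc (by simp), fun h i hi => h ⟨i, by omega⟩⟩

theorem admissible_add_const_iff {m : ℕ} {k : Fin m → ℕ} (c : ℕ) :
    Admissible m (fun i => k i + c) ↔ Admissible m k := by
  simp only [admissible_iff_forall_lt]
  exact forall₂_congr fun i j => imp_congr_right fun _ => by omega

theorem admissible_cons_iff {m a : ℕ} {t : Fin m → ℕ} :
    Admissible (m + 1) (Fin.cons a t) ↔ (∀ i, a + 2 ≤ t i) ∧ Admissible m t :=
  Fin.liftFun_cons _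

theorem Fterm_add_const (x : ℕ → ℂ) (m c : ℕ) (k : Fin m → ℕ) :
    Fterm x m (fun i => k i + c) = Fterm (fun n => x (n + c)) m k := by
  simp only [Fterm_eq_ite, admissible_add_const_iff, add_right_comm _ c 1]

theorem Fterm_cons (x : ℕ → ℂ) {m a : ℕ} {t : Fin m → ℕ} (ht : ∀ i, a + 2 ≤ t i) :
    Fterm x (m + 1) (Fin.cons a t) = x a * x (a + 1) * Fterm x m t := by
  simp only [Fterm_eq_ite, admissible_cons_iff, ht, implies_true, true_and, Fin.prod_univ_succ,
    Fin.cons_zero, Fin.cons_succ, mul_ite, mul_zero]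

theorem Fterm_zero (x : ℕ → ℂ) (k : Fin 0 → ℕ) : Fterm x 0 k = 1 := by
  simp [Fterm_eq_ite, admissible_iff_forall_lt]

theorem Admissible.of_Fterm_ne_zero {x : ℕ → ℂ} {m : ℕ} {k : Fin m → ℕ} (h : Fterm x m k ≠ 0) :
    Admissible m k := by
  by_contra hk
  simp [Fterm_eq_ite, hk] at h

theorem Admissible.exists_eq_add_one_or_eq_cons_zero {m : ℕ} {k : Fin (m + 1) → ℕ}
    (hk : Admissible (m + 1) k) :
    (∃ c : Fin (m + 1) → ℕ, k = fun i => c i + 1) ∨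
      ∃ s : Fin m → ℕ, k = Fin.cons 0 fun i => s i + 2 := by
  rcases Nat.eq_zero_or_pos (k 0) with h0 | h0
  · refine .inr ⟨fun i => k i.succ - 2, funext (Fin.cases h0 fun i => ?_)⟩
    have := hk (Fin.succ_pos i)
    simp only [Fin.cons_succ]
    omega
  · refine .inl ⟨fun i => k i - 1, funext fun i => ?_⟩
    have := hk.strictMono.monotone (Fin.zero_le i)
    simp only
    omega

theorem tsum_eq_tsum_comp_add_tsum_comp {ι κ₁ κ₂ α : Type*} [AddCommGroup α] [UniformSpace α]
    [IsUniformAddGroup α] [CompleteSpace α] [T2Space α] {f : ι → α} (hf : Summable f)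
    {g₁ : κ₁ → ι} {g₂ : κ₂ → ι} (hg₁ : Injective g₁) (hg₂ : Injective g₂)
    (hdisj : Disjoint (Set.range g₁) (Set.range g₂))
    (hsupp : support f ⊆ Set.range g₁ ∪ Set.range g₂) :
    ∑' i, f i = ∑' c, f (g₁ c) + ∑' c, f (g₂ c) := by
  rw [← tsum_range f hg₁, ← tsum_range f hg₂,
    ← (hf.subtype _).tsum_union_disjoint hdisj (hf.subtype _),
    tsum_subtype_eq_of_support_subset hsupp]

noncomputable def Fsum (x : ℕ → ℂ) (m : ℕ) : ℂ :=
  ∑' k : Fin m → ℕ, Fterm x m k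

theorem Fsum_succ {x : ℕ → ℂ} {m : ℕ} (hx : Summable (Fterm x (m + 1))) :
    Fsum x (m + 1) =
      Fsum (fun n => x (n + 1)) (m + 1) + x 0 * x 1 * Fsum (fun n => x (n + 2)) m := by
  have hshift : Injective fun (c : Fin (m + 1) → ℕ) i => c i + 1 :=
    fun c c' h => funext fun i => Nat.add_right_cancel (congrFun h i)
  have hcons : Injective fun (s : Fin m → ℕ) => (Fin.cons 0 fun i => s i + 2 : Fin (m + 1) → ℕ) :=
    fun s s' h => funext fun i => Nat.add_right_cancel (congrFun (Fin.cons_right_injective _ h) i)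
  have hdisj : Disjoint (Set.range fun (c : Fin (m + 1) → ℕ) i => c i + 1)
      (Set.range fun (s : Fin m → ℕ) => (Fin.cons 0 fun i => s i + 2 : Fin (m + 1) → ℕ)) :=
    Set.disjoint_range_iff.2 fun c s h => by simpa using congrFun h 0
  have hsupp : support (Fterm x (m + 1)) ⊆ Set.range (fun (c : Fin (m + 1) → ℕ) i => c i + 1) ∪
      Set.range fun (s : Fin m → ℕ) => (Fin.cons 0 fun i => s i + 2 : Fin (m + 1) → ℕ) := by
    intro k hk
    rcases (Admissible.of_Fterm_ne_zero hk).exists_eq_add_one_or_eq_cons_zero with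
      ⟨c, rfl⟩ | ⟨s, rfl⟩
    exacts [.inl ⟨c, rfl⟩, .inr ⟨s, rfl⟩]
  rw [Fsum, tsum_eq_tsum_comp_add_tsum_comp hx hshift hcons hdisj hsupp]
  simp only [Fterm_cons x fun i => Nat.le_add_left 2 _, Fterm_add_const, tsum_mul_left]
  rfl

theorem ENNReal.tsum_pi_prod_eq_pow {α : Type*} (e : α → ℝ≥0∞) (m : ℕ) :
    ∑' k : Fin m → α, ∏ i, e (k i) = (∑' a, e a) ^ m := by
  induction m with
  | zero => simp
  | succ m ih =>
    rw [← (Fin.consEquiv fun _ => α).tsum_eq, ENNReal.tsum_prod', pow_succ', ← ih,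
      ← ENNReal.tsum_mul_right]
    simp [Fin.consEquiv, Fin.prod_univ_succ, ENNReal.tsum_mul_left]

theorem ENNReal.factorial_mul_tsum_strictMono_le {α : Type*} [LinearOrder α] (e : α → ℝ≥0∞)
    (m : ℕ) : m ! * ∑' k : {k : Fin m → α | StrictMono k}, ∏ i, e (k.1 i) ≤ (∑' a, e a) ^ m := by
  have hinj : Injective fun p : Equiv.Perm (Fin m) × {k : Fin m → α | StrictMono k} =>
      p.2.1 ∘ p.1 := by
    rintro ⟨σ, k, hk⟩ ⟨τ, l, hl⟩ h
    simp only at h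
    obtain rfl : k = l := (hk.range_inj hl).1 <| by
      rw [← σ.surjective.range_comp, h, τ.surjective.range_comp]
    obtain rfl : σ = τ := Equiv.ext fun i => hk.injective (congrFun h i)
    rfl
  calc (m ! : ℝ≥0∞) * ∑' k : {k : Fin m → α | StrictMono k}, ∏ i, e (k.1 i)
      = ∑' p : Equiv.Perm (Fin m) × {k : Fin m → α | StrictMono k}, ∏ i, e ((p.2.1 ∘ p.1) i) := by
        have hperm (σ : Equiv.Perm (Fin m)) (k : Fin m → α) : ∏ i, e (k (σ i)) = ∏ i, e (k i) :=
          Equiv.prod_comp σ fun i => e (k i)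
        simp [ENNReal.tsum_prod', hperm, Fintype.card_perm]
    _ ≤ ∑' k : Fin m → α, ∏ i, e (k i) := ENNReal.tsum_comp_le_tsum_of_injective hinj _
    _ = (∑' a, e a) ^ m := ENNReal.tsum_pi_prod_eq_pow e m

theorem tsum_enorm_Fterm_le (y : ℕ → ℂ) (m : ℕ) :
    ∑' k, ‖Fterm y m k‖ₑ ≤ (∑' n, ‖y n * y (n + 1)‖ₑ) ^ m / m ! := by
  rw [ENNReal.le_div_iff_mul_le (.inl (Nat.cast_ne_zero.2 m.factorial_ne_zero))
    (.inl (natCast_ne_top _)), mul_comm]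
  refine le_trans ?_ (ENNReal.factorial_mul_tsum_strictMono_le _ m)
  gcongr
  rw [tsum_subtype {k : Fin m → ℕ | StrictMono k} fun k => ∏ i, ‖y (k i) * y (k i + 1)‖ₑ]
  refine ENNReal.tsum_le_tsum fun k => ?_
  rw [Fterm_eq_ite]
  split_ifs with hk
  · simp [Set.indicator_of_mem (show k ∈ {k | StrictMono k} from hk.strictMono),
      enorm_eq_nnnorm, nnnorm_prod]
  · simp

theorem summable_Fterm {y : ℕ → ℂ} (hy : Summable fun n => ‖y n * y (n + 1)‖) (m : ℕ) :
    Summable (Fterm y m) :=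
  .of_enorm <| ne_top_of_le_ne_top
    (div_ne_top (pow_ne_top (tsum_enorm_ne_top_iff_summable_norm.2 hy))
      (Nat.cast_ne_zero.2 m.factorial_ne_zero))
    (tsum_enorm_Fterm_le y m)

theorem norm_Fsum_le {y : ℕ → ℂ} (hy : Summable fun n => ‖y n * y (n + 1)‖) (m : ℕ) :
    ‖Fsum y m‖ ≤ (∑' n, ‖y n * y (n + 1)‖) ^ m / m ! := by
  have hC : 0 ≤ ∑' n, ‖y n * y (n + 1)‖ := tsum_nonneg fun _ => norm_nonneg _
  rw [← ENNReal.ofReal_le_ofReal_iff (by positivity), ofReal_norm,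
    ENNReal.ofReal_div_of_pos (by positivity), ENNReal.ofReal_pow hC, ENNReal.ofReal_natCast,
    ENNReal.ofReal_tsum_of_nonneg (fun _ => norm_nonneg _) hy]
  simp only [ofReal_norm]
  exact enorm_tsum_le_tsum_enorm.trans (tsum_enorm_Fterm_le y m)

theorem summable_alternating_Fsum {y : ℕ → ℂ} (hy : Summable fun n => ‖y n * y (n + 1)‖) :
    Summable fun m => (-1 : ℂ) ^ m * Fsum y m :=
  .of_norm_bounded (Real.summable_pow_div_factorial _) fun m => by simpa using norm_Fsum_le hy m

theorem FF_eq_one_add_tsum (y : ℕ → ℂ) :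
    FF y = 1 + ∑' m, (-1 : ℂ) ^ (m + 1) * Fsum y (m + 1) := rfl

theorem FF_eq_tsum {y : ℕ → ℂ} (hy : Summable fun n => ‖y n * y (n + 1)‖) :
    FF y = ∑' m, (-1 : ℂ) ^ m * Fsum y m := by
  rw [(summable_alternating_Fsum hy).tsum_eq_zero_add, FF_eq_one_add_tsum]
  simp [Fsum, Fterm_zero]

theorem FF_recurrence (x : ℕ → ℂ) (hx : Summable fun k => ‖x k * x (k + 1)‖) :
    FF x = FF (fun k => x (k + 1)) - x 0 * x 1 * FF (fun k => x (k + 2)) := by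
  have hx₁ : Summable fun k => ‖x (k + 1) * x (k + 1 + 1)‖ :=
    (summable_nat_add_iff (f := fun k => ‖x k * x (k + 1)‖) 1).2 hx
  have hx₂ : Summable fun k => ‖x (k + 2) * x (k + 2 + 1)‖ :=
    (summable_nat_add_iff (f := fun k => ‖x k * x (k + 1)‖) 2).2 hx
  have h₁ : Summable fun m => (-1 : ℂ) ^ (m + 1) * Fsum (fun k => x (k + 1)) (m + 1) :=
    (summable_nat_add_iff 1).2 (summable_alternating_Fsum (y := fun k => x (k + 1)) hx₁)
  have h₂ : Summable fun m => x 0 * x 1 * ((-1 : ℂ) ^ m * Fsum (fun k => x (k + 2)) m) :=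
    (summable_alternating_Fsum (y := fun k => x (k + 2)) hx₂).mul_left _
  calc FF x = 1 + ∑' m, (-1 : ℂ) ^ (m + 1) * Fsum x (m + 1) := FF_eq_one_add_tsum x
    _ = 1 + ∑' m, ((-1 : ℂ) ^ (m + 1) * Fsum (fun k => x (k + 1)) (m + 1) -
          x 0 * x 1 * ((-1 : ℂ) ^ m * Fsum (fun k => x (k + 2)) m)) := by
      congr 1
      refine tsum_congr fun m => ?_
      rw [Fsum_succ (summable_Fterm hx _)]
      ring
    _ = FF (fun k => x (k + 1)) - x 0 * x 1 * FF (fun k => x (k + 2)) := by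
      rw [h₁.tsum_sub h₂, tsum_mul_left, FF_eq_tsum (y := fun k => x (k + 2)) hx₂,
        FF_eq_one_add_tsum]
      ring
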